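/- For every λ ∈ ℝ \ {0} and μ ∈ ℝ, the map x ↦ π_{λ,μ}(x) is a representation of the Engel group: for all x, y ∈ ℝ⁴ and all h : ℝ → ℂ, π_{λ,μ}(x ∘ y)h = π_{λ,μ}(x)(π_{λ,μ}(y)h), and π_{λ,μ}(0,0,0,0)h = h. -/

import Mathlib

/-!
`π_{λ,μ}(x)` is translation by `x₁` followed by multiplication by the phase `exp (i φ_x)`, so the
representation property reduces to the cocycle identity `φ_{x∘y}(u) = φ_x(u) + φ_y(u + x₁)`,
a polynomial identity in the coordinates.
-/

noncomputable section

def engelMul (x y : ℝ × ℝ × ℝ × ℝ) : ℝ × ℝ × ℝ × ℝ :=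
  (x.1 + y.1, x.2.1 + y.2.1, x.2.2.1 + y.2.2.1 - x.1 * y.2.1,
   x.2.2.2 + y.2.2.2 + (1 / 2) * x.1 ^ 2 * y.2.1 - x.1 * y.2.2.1)

def piAct (lam mu : ℝ) (x : ℝ × ℝ × ℝ × ℝ) (h : ℝ → ℂ) (u : ℝ) : ℂ :=
  Complex.exp (Complex.I *
    ((-(mu / (2 * lam)) * x.2.1 + lam * x.2.2.2 - lam * x.2.2.1 * u
      + (lam / 2) * x.2.1 * u ^ 2 : ℝ) : ℂ)) * h (u + x.1)

section

variable (lam mu : ℝ) (x y : ℝ × ℝ × ℝ × ℝ) (h : ℝ → ℂ)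

def piPhase (u : ℝ) : ℝ :=
  -(mu / (2 * lam)) * x.2.1 + lam * x.2.2.2 - lam * x.2.2.1 * u + (lam / 2) * x.2.1 * u ^ 2

theorem piAct_apply (u : ℝ) :
    piAct lam mu x h u = Complex.exp (Complex.I * piPhase lam mu x u) * h (u + x.1) :=
  rfl

theorem piPhase_engelMul (u : ℝ) :
    piPhase lam mu (engelMul x y) u = piPhase lam mu x u + piPhase lam mu y (u + x.1) := by
  simp only [piPhase, engelMul]
  ring

theorem piAct_engelMul : piAct lam mu (engelMul x y) h = piAct lam mu x (piAct lam mu y h) := by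
  funext u
  simp only [piAct_apply, piPhase_engelMul, Complex.ofReal_add, mul_add, Complex.exp_add,
    mul_assoc, add_assoc]
  rfl

theorem piAct_zero : piAct lam mu (0, 0, 0, 0) h = h := by
  funext u
  simp [piAct_apply, piPhase]

end

/-- For every `λ ≠ 0` and `μ ∈ ℝ`, the map `x ↦ π_{λ,μ}(x)` is a representation of the
Engel group: `π_{λ,μ}(x ∘ y)h = π_{λ,μ}(x)(π_{λ,μ}(y)h)` and `π_{λ,μ}(0)h = h`. -/
theorem engel_pi_representation :
    ∀ lam : ℝ, lam ≠ 0 → ∀ mu : ℝ,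
      (∀ x y : ℝ × ℝ × ℝ × ℝ, ∀ h : ℝ → ℂ,
        piAct lam mu (engelMul x y) h = piAct lam mu x (piAct lam mu y h)) ∧
      (∀ h : ℝ → ℂ, piAct lam mu ((0 : ℝ), (0 : ℝ), (0 : ℝ), (0 : ℝ)) h = h) :=
  fun lam _ mu => ⟨piAct_engelMul lam mu, piAct_zero lam mu⟩
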